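/- arXiv:2004.12437 — 4 statements merged into one kernel-verified Lean document; each statement's English description precedes it below -/
import Mathlib

section
/- Let n > 1 be an integer and let f : R_n → R_n be a quandle homomorphism of the dihedral quandle R_n. Then there exist unique elements a, b ∈ Z/nZ such that f(x) = a·x + b for all x ∈ Z/nZ. -/
/-- Every quandle endomorphism of the dihedral quandle `R_n` (`n > 1`) is affine:
there are unique `a, b` with `f x = a * x + b`. -/
theorem dihedral_endo_affine (n : ℕ) (hn : 1 < n) (f : ZMod n → ZMod n)
    (hf : ∀ x y : ZMod n, f (2 * y - x) = 2 * f y - f x) :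
    ∃! p : ZMod n × ZMod n, ∀ x : ZMod n, f x = p.1 * x + p.2 := by
  set a := f 1 - f 0 with ha
  set b := f 0 with hb
  have key : ∀ k : ℕ, f (k : ZMod n) = a * k + b ∧ f ((k : ℕ) + 1 : ZMod n) = a * ((k : ℕ) + 1) + b := by
    intro k
    induction k with
    | zero => constructor <;> push_cast <;> ring_nf <;> simp [ha, hb] <;> ring
    | succ m ih =>
      obtain ⟨h1, h2⟩ := ih
      refine ⟨by exact_mod_cast h2, ?_⟩
      have : f (2 * ((m : ZMod n) + 1) - (m : ZMod n)) = 2 * f ((m : ZMod n) + 1) - f (m : ZMod n) :=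
        hf _ _
      have heq : (2 * ((m : ZMod n) + 1) - (m : ZMod n)) = ((m : ℕ) + 1 + 1 : ZMod n) := by
        push_cast; ring
      rw [heq] at this
      push_cast
      push_cast at this h1 h2
      rw [this, h1, h2]; ring
  refine ⟨(a, b), ?_, ?_⟩
  · intro x
    haveI : NeZero n := ⟨by omega⟩
    have := (key x.val).1
    rwa [ZMod.natCast_val, ZMod.cast_id] at this
  · rintro ⟨a', b'⟩ h
    have h0 := h 0
    have h1 := h 1
    have k0 : f 0 = b := by have := (key 0).1; simpa using this
    have k1 : f 1 = a + b := by have := (key 1).1; simpa using this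
    simp only [mul_one, mul_zero, zero_add] at h0 h1
    have hb' : b' = b := by rw [← h0, k0]
    have ha' : a' = a := by
      have h2 : a' + b' = a + b := by rw [← h1, k1]
      rw [hb'] at h2
      exact add_right_cancel h2
    simp [ha', hb']
end

section
/- Let p be a prime. Every quandle endomorphism of the dihedral quandle R_p is either a quandle automorphism or a constant map. -/
/-- Every quandle endomorphism of the dihedral quandle `R_p`, `p` prime, is either an
automorphism or a constant map. -/
theorem dihedral_endo_prime_auto_or_const (p : ℕ) (hp : p.Prime)
    (f : ZMod p → ZMod p) (hf : ∀ x y : ZMod p, f (2 * y - x) = 2 * f y - f x) :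
    Function.Bijective f ∨ ∃ c : ZMod p, ∀ x, f x = c := by
  haveI : Fact p.Prime := ⟨hp⟩
  set a : ZMod p := f 1 - f 0 with ha
  set b : ZMod p := f 0 with hb
  -- f is affine: f n = a*n + b for all naturals n
  have key : ∀ n : ℕ, f (n : ZMod p) = a * n + b ∧ f ((n : ZMod p) + 1) = a * ((n : ZMod p) + 1) + b := by
    intro n
    induction n with
    | zero => constructor <;> simp [ha, hb]
    | succ n ih =>
      obtain ⟨h1, h2⟩ := ih
      have h3 : f ((n : ZMod p) + 2) = 2 * f ((n : ZMod p) + 1) - f n := by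
        have := hf (n : ZMod p) ((n : ZMod p) + 1)
        have e : 2 * ((n : ZMod p) + 1) - n = (n : ZMod p) + 2 := by ring
        rwa [e] at this
      constructor
      · push_cast; exact h2
      · push_cast
        rw [show (n : ZMod p) + 1 + 1 = (n : ZMod p) + 2 by ring, h3, h2, h1]; ring
  have affine : ∀ x : ZMod p, f x = a * x + b := by
    intro x
    have := (key x.val).1
    rwa [ZMod.natCast_val, ZMod.cast_id] at this
  by_cases haz : a = 0
  · right
    exact ⟨b, fun x => by rw [affine x, haz]; ring⟩
  · left
    have hinj : Function.Injective f := by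
      intro x y hxy
      rw [affine x, affine y] at hxy
      have : a * x = a * y := by linear_combination hxy
      exact mul_left_cancel₀ haz this
    exact ⟨hinj, Finite.surjective_of_injective hinj⟩
end

section
/- Let p be a prime. For any two oriented link-diagram coloring spaces Col_{R_p}(D) and Col_{R_p}(D') (Z/pZ-vector spaces containing the trivial colorings), if |Col_{R_p}(D)| = |Col_{R_p}(D')| then for every subset S of End(R_p) the quandle coloring quivers Q^S_{R_p}(D) and Q^S_{R_p}(D') are isomorphic as quivers. -/
/-!
Equal cardinality makes the two coloring spaces `𝔽_p`-vector spaces of equal dimension, and the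
constant coloring `1` vanishes in one exactly when both spaces are trivial. Since linear
automorphisms act transitively on nonzero vectors, some linear isomorphism `V ≃ V'` sends `1`
to `1`. An affine `f = a x + b` acts on colorings as `v ↦ a • v + b • 1`, so such an isomorphism
carries `f`-edges to `f`-edges in both directions.
-/

open Module

section LinearEquivTransitivity

variable {K V V' : Type*} [Field K] [AddCommGroup V] [Module K V] [AddCommGroup V'] [Module K V']

theorem LinearEquiv.exists_self_apply_eq_of_ne_zero {x y : V} (hx : x ≠ 0) (hy : y ≠ 0) :
    ∃ g : V ≃ₗ[K] V, g x = y := by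
  let f := (LinearEquiv.toSpanNonzeroSingleton K V x hx).symm ≪≫ₗ
    LinearEquiv.toSpanNonzeroSingleton K V y hy
  obtain ⟨g, hg⟩ := Submodule.exists_linearEquiv_restrict_eq f
  refine ⟨g, ?_⟩
  have := hg ⟨x, Submodule.mem_span_singleton_self x⟩
  simpa [f, LinearEquiv.coord_self] using this.symm

theorem LinearEquiv.exists_apply_eq (e : V ≃ₗ[K] V') {x : V} {y : V'} (hxy : x = 0 ↔ y = 0) :
    ∃ φ : V ≃ₗ[K] V', φ x = y := by
  by_cases hx : x = 0
  · exact ⟨e, by rw [hx, map_zero, hxy.mp hx]⟩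
  · obtain ⟨g, hg⟩ :=
      exists_self_apply_eq_of_ne_zero (K := K) (e.map_ne_zero_iff.mpr hx) (hxy.not.mp hx)
    exact ⟨e ≪≫ₗ g, hg⟩

theorem nonempty_linearEquiv_of_natCard_eq [Finite K] [Finite V] (h : Nat.card V = Nat.card V') :
    Nonempty (V ≃ₗ[K] V') := by
  have : Finite V' := Nat.finite_of_card_ne_zero (h ▸ Nat.card_pos.ne')
  have := Fintype.ofFinite K
  have := Fintype.ofFinite V
  have := Fintype.ofFinite V'
  refine FiniteDimensional.nonempty_linearEquiv_of_finrank_eq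
    (Nat.pow_right_injective (Fintype.one_lt_card (α := K)) ?_)
  simpa only [← card_eq_pow_finrank, Nat.card_eq_fintype_card] using h

end LinearEquivTransitivity

section Colorings

variable {R A : Type*} [CommRing R]

theorem comp_eq_smul_add_smul_one {f : R → R} {a b : R} (hf : ∀ x, f x = a * x + b) (v : A → R) :
    f ∘ v = a • v + b • 1 := by
  ext; simp [hf]

theorem Submodule.one_eq_zero_iff_natCard_eq_one [Nontrivial R] {V : Submodule R (A → R)}
    (h1 : 1 ∈ V) : (⟨1, h1⟩ : V) = 0 ↔ Nat.card V = 1 := by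
  rw [Nat.card_eq_one_iff_unique]
  refine ⟨fun h => ⟨⟨fun v w => ?_⟩, inferInstance⟩, fun ⟨_, _⟩ => Subsingleton.elim _ _⟩
  have : IsEmpty A := ⟨fun a => one_ne_zero (congrFun (congrArg Subtype.val h) a)⟩
  exact Subtype.ext (Subsingleton.elim _ _)

variable {A' : Type*} {V : Submodule R (A → R)} {V' : Submodule R (A' → R)}
  {h1 : 1 ∈ V} {h1' : 1 ∈ V'}

theorem LinearMap.map_affine_edge_of_map_one (φ : V →ₗ[R] V') (hφ : φ ⟨1, h1⟩ = ⟨1, h1'⟩)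
    {f : R → R} {a b : R} (hf : ∀ x, f x = a * x + b) {v w : V}
    (hw : (w : A → R) = f ∘ v) : (φ w : A' → R) = f ∘ φ v := by
  have : w = a • v + b • ⟨1, h1⟩ := Subtype.ext <| by rw [hw, comp_eq_smul_add_smul_one hf]; rfl
  rw [comp_eq_smul_add_smul_one hf, this, map_add, map_smul, map_smul, hφ]
  rfl

end Colorings

theorem dihedral_prime_quiver_iso_of_card_eq_general (p : ℕ) (hp : p.Prime)
    (A A' : Type*) [Finite A]
    (V : Submodule (ZMod p) (A → ZMod p)) (V' : Submodule (ZMod p) (A' → ZMod p))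
    (h1 : (fun _ => (1 : ZMod p)) ∈ V) (h1' : (fun _ => (1 : ZMod p)) ∈ V')
    (hcard : Nat.card V = Nat.card V')
    (S : Set (ZMod p → ZMod p))
    (hS : S ⊆ {f | ∃ a b : ZMod p, ∀ x, f x = a * x + b}) :
    ∃ φ : V ≃ V', ∀ v w : V,
      (∃ f ∈ S, (w : A → ZMod p) = f ∘ (v : A → ZMod p)) ↔
      (∃ f ∈ S, (φ w : A' → ZMod p) = f ∘ (φ v : A' → ZMod p)) := by
  have : Fact p.Prime := ⟨hp⟩
  obtain ⟨e⟩ := nonempty_linearEquiv_of_natCard_eq (K := ZMod p) hcard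
  obtain ⟨φ, hφ⟩ := e.exists_apply_eq (x := ⟨1, h1⟩) (y := ⟨1, h1'⟩) <| by
    rw [Submodule.one_eq_zero_iff_natCard_eq_one, Submodule.one_eq_zero_iff_natCard_eq_one, hcard]
  have hφ' : φ.symm ⟨1, h1'⟩ = ⟨1, h1⟩ := φ.symm_apply_eq.mpr hφ.symm
  refine ⟨φ.toEquiv, fun v w =>
    ⟨fun ⟨f, hfS, hw⟩ => ⟨f, hfS, ?_⟩, fun ⟨f, hfS, hw⟩ => ⟨f, hfS, ?_⟩⟩⟩
  · obtain ⟨a, b, hf⟩ := hS hfS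
    exact φ.toLinearMap.map_affine_edge_of_map_one hφ hf hw
  · obtain ⟨a, b, hf⟩ := hS hfS
    simpa using φ.symm.toLinearMap.map_affine_edge_of_map_one hφ' hf hw

/-- Theorem 3.2: for a prime `p`, if two `R_p`-coloring spaces have the same
cardinality, then for every `S ⊆ End(R_p)` the quandle coloring quivers are
isomorphic. Colorings are modeled as a `ZMod p`-subspace of maps from the arc set
containing the trivial coloring by `1`; `End(R_p)` is the set of affine maps. -/
theorem dihedral_prime_quiver_iso_of_card_eq (p : ℕ) (hp : p.Prime)
    (A A' : Type*) [Finite A] [Finite A']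
    (V : Submodule (ZMod p) (A → ZMod p)) (V' : Submodule (ZMod p) (A' → ZMod p))
    (h1 : (fun _ => (1 : ZMod p)) ∈ V) (h1' : (fun _ => (1 : ZMod p)) ∈ V')
    (hcard : Nat.card V = Nat.card V')
    (S : Set (ZMod p → ZMod p))
    (hS : S ⊆ {f | ∃ a b : ZMod p, ∀ x, f x = a * x + b}) :
    ∃ φ : V ≃ V', ∀ v w : V,
      (∃ f ∈ S, (w : A → ZMod p) = f ∘ (v : A → ZMod p)) ↔
      (∃ f ∈ S, (φ w : A' → ZMod p) = f ∘ (φ v : A' → ZMod p)) :=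
  dihedral_prime_quiver_iso_of_card_eq_general p hp A A' V V' h1 h1' hcard S hS
end

section
/- Let p be a prime and let G = Aut(R_p) be the group of quandle automorphisms of the dihedral quandle R_p. Then G consists exactly of the maps f(x) = ax + b with a ∈ (Z/pZ)ˣ and b ∈ Z/pZ, and hence |Aut(R_p)| = p(p − 1). -/
/-!
The quandle law with `x = y - 1` says `f (y + 1) - f y = f y - f (y - 1)`, so the consecutive
differences of a quandle endomorphism of `R_n` are constant and `f` is affine,
`f x = (f 1 - f 0) * x + f 0`. An affine map `x ↦ a * x + b` is a bijection exactly when `a` is a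
unit, and `(a, b)` is determined by the map, so `Aut(R_p) ≃ (ZMod p)ˣ × ZMod p`.
-/

open Function

def IsDihedralQuandleHom {R : Type*} [Ring R] (f : R → R) : Prop :=
  ∀ x y : R, f (2 * y - x) = 2 * f y - f x

section Affine

variable {R : Type*} [CommRing R]

namespace IsDihedralQuandleHom

theorem natCast_add_one_sub {f : R → R} (hf : IsDihedralQuandleHom f) (n : ℕ) :
    f (n + 1) - f n = f 1 - f 0 := by
  induction n with
  | zero => simp
  | succ n ih =>
    have h := hf n (n + 1)
    rw [show 2 * ((n : R) + 1) - n = n + 1 + 1 by ring] at h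
    push_cast
    linear_combination h + ih

theorem apply_natCast {f : R → R} (hf : IsDihedralQuandleHom f) (n : ℕ) :
    f n = (f 1 - f 0) * n + f 0 := by
  induction n with
  | zero => simp
  | succ n ih =>
    push_cast
    linear_combination hf.natCast_add_one_sub n + ih

end IsDihedralQuandleHom

theorem isDihedralQuandleHom_affine (a b : R) : IsDihedralQuandleHom (fun x => a * x + b) := by
  intro x y
  ring

theorem bijective_affine_iff (a b : R) : Bijective (fun x => a * x + b) ↔ IsUnit a := by
  constructor
  · rintro ⟨-, hsurj⟩
    obtain ⟨x, hx⟩ := hsurj (1 + b)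
    exact IsUnit.of_mul_eq_one x (add_right_cancel hx)
  · rintro ⟨u, rfl⟩
    exact (Equiv.addRight b).bijective.comp u.mulLeft_bijective

theorem natCard_setOf_affine_isUnit :
    Nat.card {f : R → R | ∃ a b : R, IsUnit a ∧ ∀ x, f x = a * x + b} =
      Nat.card Rˣ * Nat.card R := by
  let affine : Rˣ × R → (R → R) := fun ub x => ub.1 * x + ub.2
  have hinj : Injective affine := by
    rintro ⟨u, b⟩ ⟨v, c⟩ h
    have hb : b = c := by simpa [affine] using congrFun h 0
    have hu : (u : R) = v := by simpa [affine, hb] using congrFun h 1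
    simp [hb, Units.ext hu]
  have hrange : Set.range affine = {f | ∃ a b : R, IsUnit a ∧ ∀ x, f x = a * x + b} := by
    ext f
    constructor
    · rintro ⟨⟨u, b⟩, rfl⟩
      exact ⟨u, b, u.isUnit, fun _ => rfl⟩
    · rintro ⟨a, b, ha, hf⟩
      exact ⟨(ha.unit, b), funext fun x => (hf x).symm⟩
  rw [← hrange, Nat.card_range_of_injective hinj, Nat.card_prod]

end Affine

theorem IsDihedralQuandleHom.eq_affine_zmod {n : ℕ} [NeZero n] {f : ZMod n → ZMod n}
    (hf : IsDihedralQuandleHom f) (x : ZMod n) : f x = (f 1 - f 0) * x + f 0 := by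
  obtain ⟨m, rfl⟩ := ZMod.natCast_zmod_surjective x
  exact hf.apply_natCast m

theorem setOf_dihedral_aut_eq (n : ℕ) [NeZero n] :
    {f : ZMod n → ZMod n | IsDihedralQuandleHom f ∧ Bijective f} =
      {f | ∃ a b : ZMod n, IsUnit a ∧ ∀ x, f x = a * x + b} := by
  ext f
  constructor
  · rintro ⟨hf, hbij⟩
    have hf_eq : f = fun x => (f 1 - f 0) * x + f 0 := funext hf.eq_affine_zmod
    rw [hf_eq, bijective_affine_iff] at hbij
    exact ⟨_, _, hbij, hf.eq_affine_zmod⟩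
  · rintro ⟨a, b, ha, hf⟩
    obtain rfl : f = fun x => a * x + b := funext hf
    exact ⟨isDihedralQuandleHom_affine a b, (bijective_affine_iff a b).2 ha⟩

/-- The quandle automorphisms of the dihedral quandle `R_p` (`p` prime) are exactly
the affine maps `f x = a x + b` with `a` a unit, and there are `p (p - 1)` of them. -/
theorem dihedral_aut_description (p : ℕ) (hp : p.Prime) :
    ({f : ZMod p → ZMod p |
        (∀ x y : ZMod p, f (2 * y - x) = 2 * f y - f x) ∧ Function.Bijective f}
      = {f : ZMod p → ZMod p | ∃ a b : ZMod p, IsUnit a ∧ ∀ x, f x = a * x + b}) ∧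
    Nat.card {f : ZMod p → ZMod p |
        (∀ x y : ZMod p, f (2 * y - x) = 2 * f y - f x) ∧ Function.Bijective f}
      = p * (p - 1) := by
  have : Fact p.Prime := ⟨hp⟩
  have hset := setOf_dihedral_aut_eq p
  dsimp only [IsDihedralQuandleHom] at hset
  refine ⟨hset, ?_⟩
  rw [hset, natCard_setOf_affine_isUnit,
    Nat.card_eq_fintype_card, ZMod.card_units, Nat.card_zmod, mul_comm]
end
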